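/- For all natural numbers n > m ≥ 0, the cardinalities b_{n,m} := |B_{n,m}| satisfy the recurrence b_{n,m} = b_{n,m-1} + Σ_{k=1}^{n-m-1} b_{n-k,m-1} · C(b_{m,m-1}, k) + C(b_{m,m-1}, n−m) · Σ_{k=0}^{m} b_{k,k-1}, where b_{0,-1} = 1, b_{n,-1} = 0 for n ≥ 1, and C(a,b) = 0 when a < b. -/

import Mathlib

open ZFSet Finset

noncomputable section

abbrev HFSet := ZFSet.{0}

/-- The adjunctive hierarchy of hereditarily finite sets. -/
def A : ℕ → Set HFSet
  | 0 => {∅}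
  | n + 1 => {∅} ∪ {z | ∃ x ∈ A n, ∃ y ∈ A n, z = insert y x}

/-- Integer-indexed version, with `A n = ∅` for `n < 0`. -/
def Az (n : ℤ) : Set HFSet := if 0 ≤ n then A n.toNat else ∅

/-- The cumulative hierarchy (von Neumann) of hereditarily finite sets. -/
def W : ℕ → HFSet
  | 0 => ∅
  | n + 1 => ZFSet.powerset (W n)

/-- A ZF set is hereditarily finite if it lies in some finite level of the
cumulative hierarchy. -/
def IsHF (x : HFSet) : Prop := ∃ n, x ∈ W n

/-- The adjunctive rank. -/
def ark (x : HFSet) : ℕ := sInf {n | x ∈ A n}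

/-- The (von Neumann) rank of a hereditarily finite set. -/
def rk (x : HFSet) : ℕ := sInf {n | x ∈ W (n + 1)}

/-- `B n m` = sets in `A n \ A (n-1)` all of whose elements lie in `A m`. -/
def B (n m : ℤ) : Set HFSet :=
  {x | x ∈ Az n ∧ x ∉ Az (n - 1) ∧ ∀ y, y ∈ x → y ∈ Az m}

def b (n m : ℤ) : ℕ := (B n m).ncard

def a (n : ℕ) : ℕ := (A n).ncard

def c (n : ℕ) : ℕ := (Az n \ Az ((n : ℤ) - 1)).ncard

local instance : DecidableEq HFSet := Classical.decEq _
attribute [local instance] Classical.propDecidable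

lemma empty_mem_A (n : ℕ) : ∅ ∈ A n := by
  cases n with
  | zero => rfl
  | succ n => left; rfl

lemma mem_A_zero {x : HFSet} (h : x ∈ A 0) : x = ∅ := h

lemma A_succ_cases {n : ℕ} {x : HFSet} (h : x ∈ A (n+1)) :
    x = ∅ ∨ ∃ z ∈ A n, ∃ y ∈ A n, x = insert y z := h

lemma A_mono_succ (n : ℕ) : A n ⊆ A (n+1) := by
  induction n with
  | zero => intro x hx; left; exact hx
  | succ n ih =>
    intro x hx
    rcases A_succ_cases hx with h | ⟨z, hz, y, hy, rfl⟩
    · exact h ▸ empty_mem_A _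
    · exact Or.inr ⟨z, ih hz, y, ih hy, rfl⟩

lemma A_mono {m n : ℕ} (h : m ≤ n) : A m ⊆ A n := by
  induction h with
  | refl => exact subset_rfl
  | step _ ih => exact ih.trans (A_mono_succ _)

lemma mem_A_elem : ∀ {n : ℕ} {x y : HFSet}, x ∈ A (n+1) → y ∈ x → y ∈ A n := by
  intro n
  induction n with
  | zero =>
    intro x y hx hyx
    rcases A_succ_cases hx with rfl | ⟨z, hz, w, hw, rfl⟩
    · exact absurd hyx (ZFSet.notMem_empty y)
    · rcases ZFSet.mem_insert_iff.1 hyx with rfl | h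
      · exact hw
      · rw [mem_A_zero hz] at h; exact absurd h (ZFSet.notMem_empty y)
  | succ n ih =>
    intro x y hx hyx
    rcases A_succ_cases hx with rfl | ⟨z, hz, w, hw, rfl⟩
    · exact absurd hyx (ZFSet.notMem_empty y)
    · rcases ZFSet.mem_insert_iff.1 hyx with rfl | h
      · exact hw
      · exact A_mono_succ n (ih hz h)

lemma A_finite (n : ℕ) : (A n).Finite := by
  induction n with
  | zero => exact Set.finite_singleton _
  | succ n ih =>
    have : A (n+1) ⊆ {(∅ : HFSet)} ∪ Set.image2 (fun y x => insert y x) (A n) (A n) := by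
      intro x hx
      rcases A_succ_cases hx with rfl | ⟨z, hz, y, hy, rfl⟩
      · exact Or.inl rfl
      · exact Or.inr ⟨y, hy, z, hz, rfl⟩
    exact Set.Finite.subset ((Set.finite_singleton _).union (Set.Finite.image2 _ ih ih)) this

lemma eq_empty_of_forall_not_mem {x : HFSet} (h : ∀ z, z ∉ x) : x = ∅ :=
  ZFSet.ext fun z => ⟨fun hz => absurd hz (h z), fun hz => absurd hz (ZFSet.notMem_empty z)⟩

lemma A_subset_closed : ∀ {n : ℕ} {x y : HFSet}, x ∈ A n → (∀ z, z ∈ y → z ∈ x) → y ∈ A n := by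
  intro n
  induction n with
  | zero =>
    intro x y hx hsub
    rw [mem_A_zero hx] at hsub
    have : y = ∅ := eq_empty_of_forall_not_mem fun z hz => ZFSet.notMem_empty z (hsub z hz)
    exact this ▸ empty_mem_A 0
  | succ n ih =>
    intro x y hx hsub
    rcases A_succ_cases hx with rfl | ⟨z, hz, w, hw, rfl⟩
    · have : y = ∅ := eq_empty_of_forall_not_mem fun u hu => ZFSet.notMem_empty u (hsub u hu)
      exact this ▸ empty_mem_A _
    · by_cases hwy : w ∈ y
      · have hsub' : ∀ u, u ∈ y \ {w} → u ∈ z := by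
          intro u hu
          rw [ZFSet.mem_sdiff] at hu
          rcases ZFSet.mem_insert_iff.1 (hsub u hu.1) with rfl | h
          · exact absurd (ZFSet.mem_singleton.2 rfl) hu.2
          · exact h
        have h1 : y \ {w} ∈ A n := ih hz hsub'
        have : y = insert w (y \ {w}) := by
          apply ZFSet.ext; intro u
          simp only [ZFSet.mem_insert_iff, ZFSet.mem_sdiff, ZFSet.mem_singleton]
          constructor
          · intro hu; by_cases h : u = w
            · exact Or.inl h
            · exact Or.inr ⟨hu, h⟩
          · rintro (rfl | ⟨hu, _⟩) <;> [exact hwy; exact hu]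
        exact Or.inr ⟨_, h1, w, hw, this⟩
      · have : ∀ u, u ∈ y → u ∈ z := by
          intro u hu
          rcases ZFSet.mem_insert_iff.1 (hsub u hu) with rfl | h
          · exact absurd hu hwy
          · exact h
        exact A_mono_succ n (ih hz this)

lemma mem_A_succ_iff {n : ℕ} {x : HFSet} :
    x ∈ A (n+1) ↔ x = ∅ ∨ ∃ y, y ∈ x ∧ y ∈ A n ∧ x \ {y} ∈ A n := by
  constructor
  · intro hx
    rcases A_succ_cases hx with rfl | ⟨z, hz, w, hw, rfl⟩
    · exact Or.inl rfl
    · refine Or.inr ⟨w, ZFSet.mem_insert w z, hw, ?_⟩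
      apply A_subset_closed hz
      intro u hu
      rw [ZFSet.mem_sdiff, ZFSet.mem_singleton] at hu
      rcases ZFSet.mem_insert_iff.1 hu.1 with rfl | h
      · exact absurd rfl hu.2
      · exact h
  · rintro (rfl | ⟨y, hyx, hy, hd⟩)
    · exact empty_mem_A _
    · refine Or.inr ⟨x \ {y}, hd, y, hy, ?_⟩
      apply ZFSet.ext; intro u
      simp only [ZFSet.mem_insert_iff, ZFSet.mem_sdiff, ZFSet.mem_singleton]
      constructor
      · intro hu; by_cases h : u = y
        · exact Or.inl h
        · exact Or.inr ⟨hu, h⟩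
      · rintro (rfl | ⟨hu, _⟩) <;> [exact hyx; exact hu]

/-- turn a list of HF sets into an HF set -/
local instance : DecidableEq HFSet := Classical.decEq _
attribute [local instance] Classical.propDecidable

def ofList : List HFSet → HFSet
  | [] => ∅
  | a :: l => insert a (ofList l)

lemma mem_ofList {z : HFSet} : ∀ {l : List HFSet}, z ∈ ofList l ↔ z ∈ l := by
  intro l
  induction l with
  | nil => simp [ofList, ZFSet.notMem_empty]
  | cons a l ih => simp [ofList, ZFSet.mem_insert_iff, ih]

lemma up (p : ℕ) (s : Finset HFSet) : ∀ (x₀ x : HFSet), x₀ ∈ A p →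
    (∀ y ∈ s, y ∈ A p) → (∀ y ∈ s, y ∉ x₀) →
    (∀ z, z ∈ x ↔ (z ∈ x₀ ∨ z ∈ s)) → x ∈ A (p + s.card) := by
  induction s using Finset.induction_on with
  | empty =>
    intro x₀ x h0 _ _ hext
    have : x = x₀ := ZFSet.ext fun z => by simpa using hext z
    simpa [this] using h0
  | @insert _ _ ha ih =>
    rename_i a t
    intro x₀ x h0 hAp hnx hext
    have hax : a ∈ x := (hext a).2 (Or.inr (Finset.mem_insert_self a t))
    have hx' : ∀ z, z ∈ x \ {a} ↔ (z ∈ x₀ ∨ z ∈ t) := by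
      intro z
      simp only [ZFSet.mem_sdiff, ZFSet.mem_singleton, hext z]
      constructor
      · rintro ⟨h1 | h1, h2⟩
        · exact Or.inl h1
        · rcases Finset.mem_insert.1 h1 with rfl | h
          · exact absurd rfl h2
          · exact Or.inr h
      · rintro (h | h)
        · exact ⟨Or.inl h, fun heq => hnx a (Finset.mem_insert_self a t) (heq ▸ h)⟩
        · exact ⟨Or.inr (Finset.mem_insert_of_mem h), fun heq => ha (heq ▸ h)⟩
    have h1 : x \ {a} ∈ A (p + t.card) :=
      ih x₀ _ h0 (fun y hy => hAp y (Finset.mem_insert_of_mem hy))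
        (fun y hy => hnx y (Finset.mem_insert_of_mem hy)) hx'
    have hxeq : x = insert a (x \ {a}) := by
      apply ZFSet.ext; intro z
      simp only [ZFSet.mem_insert_iff, ZFSet.mem_sdiff, ZFSet.mem_singleton]
      constructor
      · intro hz; by_cases h : z = a
        · exact Or.inl h
        · exact Or.inr ⟨hz, h⟩
      · rintro (rfl | ⟨hz, _⟩) <;> [exact hax; exact hz]
    have : x ∈ A (p + t.card + 1) :=
      Or.inr ⟨_, h1, a, A_mono (Nat.le_add_right p t.card) (hAp a (Finset.mem_insert_self a t)), hxeq⟩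
    rwa [Finset.card_insert_of_notMem ha, ← Nat.add_assoc]

lemma down (L : Set HFSet) (m : ℕ) (hLlt : ∀ j, j < m → A j ⊆ L) (hLle : L ⊆ A m) :
    ∀ (j : ℕ) (x : HFSet) (s : Finset HFSet) (x₀ : HFSet), x ∈ A j →
    (∀ y ∈ s, y ∈ x) → (∀ y ∈ s, y ∉ L) → (∀ y, y ∈ x → y ∉ L → y ∈ s) →
    (∀ z, z ∈ x₀ ↔ (z ∈ x ∧ z ∉ s)) →
    (s ≠ ∅ → m + s.card ≤ j) ∧ x₀ ∈ A (j - s.card) := by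
  intro j
  induction j with
  | zero =>
    intro x s x₀ hx hsx _ _ hext
    have hxe : x = ∅ := mem_A_zero hx
    have hs : s = ∅ := by
      apply Finset.eq_empty_iff_forall_notMem.2
      intro y hy
      exact ZFSet.notMem_empty y (hxe ▸ hsx y hy)
    subst hs
    have : x₀ = x := ZFSet.ext fun z => by simpa using hext z
    rw [this]
    exact ⟨fun h => absurd rfl h, hx⟩
  | succ j ih =>
    intro x s x₀ hx hsx hsL hcov hext
    by_cases hs : s = ∅
    · subst hs
      have : x₀ = x := ZFSet.ext fun z => by simpa using hext z
      rw [this]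
      exact ⟨fun h => absurd rfl h, hx⟩
    · rcases mem_A_succ_iff.1 hx with rfl | ⟨y, hyx, hyA, hdA⟩
      · obtain ⟨a, ha⟩ := Finset.nonempty_iff_ne_empty.2 hs
        exact absurd (hsx a ha) (ZFSet.notMem_empty a)
      by_cases hys : y ∈ s
      · -- remove y from both x and s
        have hmj : m ≤ j := by
          by_contra h
          exact hsL y hys (hLlt j (Nat.lt_of_not_le h) hyA)
        have hcard : 1 ≤ s.card := Finset.card_pos.2 ⟨y, hys⟩
        have := ih (x \ {y}) (s.erase y) x₀ hdA
          (fun u hu => by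
            have h1 := Finset.mem_of_mem_erase hu
            have h2 := Finset.ne_of_mem_erase hu
            exact ZFSet.mem_sdiff.2 ⟨hsx u h1, fun hh => h2 (ZFSet.mem_singleton.1 hh)⟩)
          (fun u hu => hsL u (Finset.mem_of_mem_erase hu))
          (fun u hu huL => by
            rw [ZFSet.mem_sdiff, ZFSet.mem_singleton] at hu
            exact Finset.mem_erase.2 ⟨hu.2, hcov u hu.1 huL⟩)
          (fun z => by
            rw [hext z, ZFSet.mem_sdiff, ZFSet.mem_singleton, Finset.mem_erase]
            constructor
            · rintro ⟨hzx, hzs⟩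
              have hzy : z ≠ y := fun h => hzs (h ▸ hys)
              exact ⟨⟨hzx, hzy⟩, fun ⟨_, h⟩ => hzs h⟩
            · rintro ⟨⟨hzx, hzy⟩, hzs⟩
              exact ⟨hzx, fun h => hzs ⟨hzy, h⟩⟩)
        rw [Finset.card_erase_of_mem hys] at this
        obtain ⟨h1, h2⟩ := this
        constructor
        · intro _
          by_cases he : s.erase y = ∅
          · have : s.card = 1 := by
              have := Finset.card_erase_of_mem hys
              rw [he] at this
              simp at this
              omega
            omega
          · have := h1 he
            omega
        · have : j - (s.card - 1) = j + 1 - s.card := by omega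
          rwa [this] at h2
      · -- y ∉ s : y ∈ L
        have hyL : y ∈ L := by
          by_contra h
          exact hys (hcov y hyx h)
        have := ih (x \ {y}) s (x₀ \ {y}) hdA
          (fun u hu => ZFSet.mem_sdiff.2 ⟨hsx u hu,
            fun hh => hys ((ZFSet.mem_singleton.1 hh) ▸ hu)⟩)
          hsL
          (fun u hu huL => hcov u (ZFSet.mem_sdiff.1 hu).1 huL)
          (fun z => by
            simp only [ZFSet.mem_sdiff, hext z, ZFSet.mem_singleton]
            tauto)
        obtain ⟨h1, h2⟩ := this
        have hms : m + s.card ≤ j := h1 hs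
        have hcard : 1 ≤ s.card := Finset.card_pos.2 (Finset.nonempty_iff_ne_empty.2 hs)
        refine ⟨fun _ => by omega, ?_⟩
        have hyx₀ : y ∈ x₀ := (hext y).2 ⟨hyx, hys⟩
        have hx₀eq : x₀ = insert y (x₀ \ {y}) := by
          apply ZFSet.ext; intro z
          simp only [ZFSet.mem_insert_iff, ZFSet.mem_sdiff, ZFSet.mem_singleton]
          constructor
          · intro hz; by_cases h : z = y
            · exact Or.inl h
            · exact Or.inr ⟨hz, h⟩
          · rintro (rfl | ⟨hz, _⟩) <;> [exact hyx₀; exact hz]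
        have hyA' : y ∈ A (j - s.card) := A_mono (by omega) (hLle hyL)
        have : x₀ ∈ A (j - s.card + 1) := Or.inr ⟨_, h2, y, hyA', hx₀eq⟩
        have heq : j - s.card + 1 = j + 1 - s.card := by omega
        rwa [heq] at this

/-- the "low" set of level m : everything of adjunctive rank < m -/
def Lw (m : ℕ) : Set HFSet := Az ((m : ℤ) - 1)

lemma Az_coe (k : ℕ) : Az k = A k := by simp [Az]

lemma Az_coe_sub_one (k : ℕ) : Az ((k : ℤ) - 1) = if 1 ≤ k then A (k-1) else ∅ := by
  cases k with
  | zero =>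
    rw [show ((0:ℕ):ℤ) - 1 = -1 by norm_num, if_neg (by omega)]
    unfold Az
    rw [if_neg (by omega)]
  | succ k =>
    rw [show ((k+1:ℕ):ℤ) - 1 = (k:ℤ) by push_cast; ring, Az_coe, if_pos (by omega)]
    norm_num

lemma Lw_zero : Lw 0 = ∅ := by rw [Lw, Az_coe_sub_one, if_neg (by omega)]

lemma Lw_succ (m : ℕ) : Lw (m+1) = A m := by
  rw [Lw, Az_coe_sub_one, if_pos (by omega)]
  norm_num

lemma Lw_lt {j m : ℕ} (h : j < m) : A j ⊆ Lw m := by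
  cases m with
  | zero => omega
  | succ m => rw [Lw_succ]; exact A_mono (by omega)

lemma Lw_le (m : ℕ) : Lw m ⊆ A m := by
  cases m with
  | zero => rw [Lw_zero]; exact Set.empty_subset _
  | succ m => rw [Lw_succ]; exact A_mono_succ m

lemma mem_Lw_of_mem {m : ℕ} {x y : HFSet} (hx : x ∈ A m) (hy : y ∈ x) : y ∈ Lw m := by
  cases m with
  | zero => rw [mem_A_zero hx] at hy; exact absurd hy (ZFSet.notMem_empty y)
  | succ m => rw [Lw_succ]; exact mem_A_elem hx hy

/-- unfolded form of `B n m` for positive nat `n` -/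
lemma B_coe_eq {n : ℕ} (hn : 1 ≤ n) (m : ℤ) :
    B (n : ℤ) m = {x | x ∈ A n ∧ x ∉ A (n-1) ∧ ∀ y, y ∈ x → y ∈ Az m} := by
  unfold B
  rw [Az_coe, Az_coe_sub_one, if_pos hn]

lemma B_self_eq (k : ℕ) : B (k : ℤ) ((k : ℤ) - 1) = A k \ Lw k := by
  cases Nat.eq_zero_or_pos k with
  | inl h =>
    subst h
    ext x
    unfold B
    have hneg : Az (((0:ℕ):ℤ) - 1) = (∅ : Set HFSet) := by simpa using Az_coe_sub_one 0
    simp only [Set.mem_setOf_eq, Set.mem_diff, hneg, Az_coe, Lw_zero]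
    constructor
    · rintro ⟨h1, _, _⟩; exact ⟨h1, Set.notMem_empty x⟩
    · rintro ⟨h1, _⟩
      refine ⟨h1, Set.notMem_empty x, ?_⟩
      intro y hy
      rw [mem_A_zero h1] at hy
      exact absurd hy (ZFSet.notMem_empty y)
  | inr h =>
    ext x
    rw [B_coe_eq h]
    simp only [Set.mem_setOf_eq, Set.mem_diff]
    have hL : Az ((k:ℤ) - 1) = Lw k := rfl
    rw [hL]
    have hLA : Lw k = A (k - 1) := by
      cases k with
      | zero => omega
      | succ k => rw [Lw_succ]; congr 1
    constructor
    · rintro ⟨h1, h2, _⟩; exact ⟨h1, by rwa [hLA]⟩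
    · rintro ⟨h1, h2⟩
      exact ⟨h1, by rwa [← hLA], fun y hy => mem_Lw_of_mem h1 hy⟩

lemma A_ncard_sum (m : ℕ) :
    (A m).ncard = ∑ k ∈ Finset.range (m+1), b (k : ℤ) ((k : ℤ) - 1) := by
  induction m with
  | zero =>
    rw [show (0:ℕ)+1 = 1 from rfl, Finset.sum_range_one, b, B_self_eq, Lw_zero, Set.diff_empty]
  | succ m ih =>
    rw [Finset.sum_range_succ, ← ih, b, B_self_eq, Lw_succ]
    have := Set.ncard_diff_add_ncard_of_subset (A_mono_succ m) (A_finite (m+1))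
    omega

lemma DmFinite (m : ℕ) : (A m \ Lw m).Finite := (A_finite m).subset Set.diff_subset

def Dfin (m : ℕ) : Finset HFSet := (DmFinite m).toFinset

lemma Dfin_spec {m : ℕ} {y : HFSet} : y ∈ Dfin m ↔ y ∈ A m ∧ y ∉ Lw m := by
  rw [Dfin, Set.Finite.mem_toFinset, Set.mem_diff]

lemma bD (m : ℕ) : b (m:ℤ) ((m:ℤ)-1) = (Dfin m).card := by
  rw [b, B_self_eq]; exact Set.ncard_eq_toFinset_card _ (DmFinite m)

def hfin (m : ℕ) (x : HFSet) : Finset HFSet := (Dfin m).filter (fun y => y ∈ x)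

lemma hfin_spec {m : ℕ} {x y : HFSet} : y ∈ hfin m x ↔ (y ∈ A m ∧ y ∉ Lw m) ∧ y ∈ x := by
  rw [hfin, Finset.mem_filter, Dfin_spec]

def lowZ (m : ℕ) (x : HFSet) : HFSet := ZFSet.sep (· ∈ Lw m) x

lemma lowZ_spec {m : ℕ} {x z : HFSet} : z ∈ lowZ m x ↔ z ∈ x ∧ z ∈ Lw m := ZFSet.mem_sep

lemma B_subset_A (n : ℕ) (m' : ℤ) : B (n:ℤ) m' ⊆ A n := by
  intro x hx
  rw [← Az_coe]
  exact hx.1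

lemma BzFinite (n : ℕ) (m' : ℤ) : (B (n:ℤ) m').Finite :=
  (A_finite n).subset (B_subset_A n m')

def Tfin (n m : ℕ) : Finset HFSet := (BzFinite n (m:ℤ)).toFinset

lemma Tcard (n m : ℕ) : b (n:ℤ) (m:ℤ) = (Tfin n m).card :=
  Set.ncard_eq_toFinset_card _ (BzFinite n (m:ℤ))

lemma mem_Tfin {n m : ℕ} (hn : 1 ≤ n) {x : HFSet} :
    x ∈ Tfin n m ↔ x ∈ A n ∧ x ∉ A (n-1) ∧ ∀ y, y ∈ x → y ∈ A m := by
  rw [Tfin, Set.Finite.mem_toFinset, B_coe_eq hn, Az_coe]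
  rfl

/-- the key characterization: membership in `A j` splits along the high part -/
lemma memA_iff_split {m : ℕ} {x x₀ : HFSet} {s : Finset HFSet}
    (hxm : ∀ y, y ∈ x → y ∈ A m)
    (hsdef : ∀ y, y ∈ s ↔ (y ∈ x ∧ y ∉ Lw m))
    (hx₀ : ∀ z, z ∈ x₀ ↔ (z ∈ x ∧ z ∈ Lw m))
    (hk : s ≠ ∅) (j : ℕ) :
    x ∈ A j ↔ (m + s.card ≤ j ∧ x₀ ∈ A (j - s.card)) := by
  constructor
  · intro hx
    have := down (Lw m) m (fun _ hj => Lw_lt hj) (Lw_le m) j x s x₀ hx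
      (fun y hy => ((hsdef y).1 hy).1)
      (fun y hy => ((hsdef y).1 hy).2)
      (fun y hyx hyL => (hsdef y).2 ⟨hyx, hyL⟩)
      (fun z => by
        rw [hx₀ z]
        constructor
        · rintro ⟨h1, h2⟩; exact ⟨h1, fun hz => ((hsdef z).1 hz).2 h2⟩
        · rintro ⟨h1, h2⟩
          refine ⟨h1, ?_⟩
          by_contra h
          exact h2 ((hsdef z).2 ⟨h1, h⟩))
    exact ⟨this.1 hk, this.2⟩
  · rintro ⟨h1, h2⟩
    have := up (j - s.card) s x₀ x h2
      (fun y hy => A_mono (by omega) (hxm y ((hsdef y).1 hy).1))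
      (fun y hy hyx₀ => ((hsdef y).1 hy).2 ((hx₀ y).1 hyx₀).2)
      (fun z => by
        rw [hx₀ z]
        constructor
        · intro hz
          by_cases h : z ∈ Lw m
          · exact Or.inl ⟨hz, h⟩
          · exact Or.inr ((hsdef z).2 ⟨hz, h⟩)
        · rintro (⟨h, _⟩ | h)
          · exact h
          · exact ((hsdef z).1 h).1)
    rwa [show j - s.card + s.card = j by omega] at this

lemma hfin_sdef {m : ℕ} {x : HFSet} (hxm : ∀ y, y ∈ x → y ∈ A m) :
    ∀ y, y ∈ hfin m x ↔ (y ∈ x ∧ y ∉ Lw m) := by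
  intro y
  rw [hfin_spec]
  exact ⟨fun h => ⟨h.2, h.1.2⟩, fun ⟨h1, h2⟩ => ⟨⟨hxm y h1, h2⟩, h1⟩⟩

lemma hfin_card_le {n m : ℕ} (hmn : m < n) {x : HFSet} (hx : x ∈ Tfin n m) :
    (hfin m x).card ≤ n - m := by
  obtain ⟨hxA, _, hxm⟩ := (mem_Tfin (by omega) ).1 hx
  by_cases h : hfin m x = ∅
  · rw [h, Finset.card_empty]; omega
  · have := ((memA_iff_split hxm (hfin_sdef hxm) (fun z => lowZ_spec) h n).1 hxA).1
    omega

def Gset (n m k : ℕ) : Set HFSet :=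
  {x₀ | x₀ ∈ A (n-k) ∧ (m + k + 1 ≤ n → x₀ ∉ A (n-1-k)) ∧ ∀ z, z ∈ x₀ → z ∈ Lw m}

lemma Gset_finite (n m k : ℕ) : (Gset n m k).Finite :=
  (A_finite (n-k)).subset fun _ hx => hx.1

lemma fiber_card {n m k : ℕ} (hmn : m < n) (hk1 : 1 ≤ k) (hk2 : k ≤ n - m) :
    ((Tfin n m).filter (fun x => (hfin m x).card = k)).card
      = Nat.choose (Dfin m).card k * (Gset n m k).ncard := by
  have hn : 1 ≤ n := by omega
  rw [Set.ncard_eq_toFinset_card _ (Gset_finite n m k), ← Finset.card_powersetCard,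
    ← Finset.card_product]
  apply Finset.card_bij (fun x _ => (hfin m x, lowZ m x))
  · -- maps into the product
    intro x hx
    rw [Finset.mem_filter] at hx
    obtain ⟨hxT, hcard⟩ := hx
    obtain ⟨hxA, hxA', hxm⟩ := (mem_Tfin hn).1 hxT
    have hne : hfin m x ≠ ∅ := by
      intro h; rw [h, Finset.card_empty] at hcard; omega
    have hchar := memA_iff_split hxm (hfin_sdef hxm) (fun z => lowZ_spec) hne
    rw [Finset.mem_product, Finset.mem_powersetCard, Set.Finite.mem_toFinset]
    dsimp only
    refine ⟨⟨Finset.filter_subset _ _, hcard⟩, ?_, ?_, fun z hz => (lowZ_spec.1 hz).2⟩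
    · have := ((hchar n).1 hxA).2
      rwa [hcard] at this
    · intro hle hcon
      apply hxA'
      apply (hchar (n-1)).2
      rw [hcard]
      exact ⟨by omega, hcon⟩
  · -- injective
    intro x1 h1 x2 h2 heq
    rw [Finset.mem_filter] at h1 h2
    obtain ⟨_, _, hxm1⟩ := (mem_Tfin hn).1 h1.1
    obtain ⟨_, _, hxm2⟩ := (mem_Tfin hn).1 h2.1
    have e1 : hfin m x1 = hfin m x2 := congrArg Prod.fst heq
    have e2 : lowZ m x1 = lowZ m x2 := congrArg Prod.snd heq
    apply ZFSet.ext
    intro z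
    constructor
    · intro hz
      by_cases h : z ∈ Lw m
      · have : z ∈ lowZ m x2 := e2 ▸ lowZ_spec.2 ⟨hz, h⟩
        exact (lowZ_spec.1 this).1
      · have : z ∈ hfin m x2 := e1 ▸ (hfin_sdef hxm1 z).2 ⟨hz, h⟩
        exact ((hfin_sdef hxm2 z).1 this).1
    · intro hz
      by_cases h : z ∈ Lw m
      · have : z ∈ lowZ m x1 := e2 ▸ lowZ_spec.2 ⟨hz, h⟩
        exact (lowZ_spec.1 this).1
      · have : z ∈ hfin m x1 := e1 ▸ (hfin_sdef hxm2 z).2 ⟨hz, h⟩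
        exact ((hfin_sdef hxm1 z).1 this).1
  · -- surjective
    rintro ⟨s, x₀⟩ hst
    rw [Finset.mem_product, Finset.mem_powersetCard, Set.Finite.mem_toFinset] at hst
    dsimp only at hst
    obtain ⟨⟨hsD, hscard⟩, hG1, hG2, hG3⟩ := hst
    set x : HFSet := x₀ ∪ ofList s.toList with hxdef
    have hmem : ∀ z, z ∈ x ↔ (z ∈ x₀ ∨ z ∈ s) := by
      intro z
      rw [hxdef, ZFSet.mem_union, mem_ofList]
      simp [Finset.mem_toList]
    have hsprop : ∀ y ∈ s, y ∈ A m ∧ y ∉ Lw m := fun y hy => Dfin_spec.1 (hsD hy)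
    have hxm : ∀ y, y ∈ x → y ∈ A m := by
      intro y hy
      rcases (hmem y).1 hy with h | h
      · exact Lw_le m (hG3 y h)
      · exact (hsprop y h).1
    have hsdef : ∀ y, y ∈ s ↔ (y ∈ x ∧ y ∉ Lw m) := by
      intro y
      constructor
      · intro hy
        exact ⟨(hmem y).2 (Or.inr hy), (hsprop y hy).2⟩
      · rintro ⟨hyx, hyL⟩
        rcases (hmem y).1 hyx with h | h
        · exact absurd (hG3 y h) hyL
        · exact h
    have hx₀ : ∀ z, z ∈ x₀ ↔ (z ∈ x ∧ z ∈ Lw m) := by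
      intro z
      constructor
      · intro hz
        exact ⟨(hmem z).2 (Or.inl hz), hG3 z hz⟩
      · rintro ⟨hzx, hzL⟩
        rcases (hmem z).1 hzx with h | h
        · exact h
        · exact absurd hzL (hsprop z h).2
    have hne : s ≠ ∅ := by
      intro h; rw [h, Finset.card_empty] at hscard; omega
    have hchar := memA_iff_split hxm hsdef hx₀ hne
    have hxA : x ∈ A n := (hchar n).2 ⟨by omega, by rw [hscard]; exact hG1⟩
    have hxA' : x ∉ A (n-1) := by
      intro hcon
      obtain ⟨hle, hlow⟩ := (hchar (n-1)).1 hcon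
      rw [hscard] at hle hlow
      by_cases h : m + k + 1 ≤ n
      · exact hG2 h hlow
      · omega
    have hfeq : hfin m x = s := by
      apply Finset.ext
      intro y
      rw [hfin_sdef hxm y, hsdef y]
    have hleq : lowZ m x = x₀ := by
      apply ZFSet.ext
      intro z
      rw [lowZ_spec, hx₀ z]
    refine ⟨x, ?_, ?_⟩
    · rw [Finset.mem_filter, mem_Tfin hn]
      exact ⟨⟨hxA, hxA', hxm⟩, by rw [hfeq, hscard]⟩
    · rw [hfeq, hleq]

lemma Gset_high (n m : ℕ) (hmn : m < n) : Gset n m (n-m) = A m := by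
  ext x₀
  simp only [Gset, Set.mem_setOf_eq]
  have h1 : n - (n-m) = m := by omega
  have h2 : ¬ (m + (n-m) + 1 ≤ n) := by omega
  rw [h1]
  constructor
  · rintro ⟨h, _, _⟩; exact h
  · intro h
    exact ⟨h, fun hc => absurd hc h2, fun z hz => mem_Lw_of_mem h hz⟩

lemma Gset_mid (n m k : ℕ) (hmn : m < n) (hk1 : 1 ≤ k) (hk2 : k ≤ n - m - 1) :
    Gset n m k = B ((n-k : ℕ) : ℤ) ((m:ℤ) - 1) := by
  have hnk : 1 ≤ n - k := by omega
  rw [B_coe_eq hnk]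
  ext x₀
  simp only [Gset, Set.mem_setOf_eq]
  have h2 : m + k + 1 ≤ n := by omega
  have h3 : n - 1 - k = n - k - 1 := by omega
  constructor
  · rintro ⟨ha, hb, hc⟩
    exact ⟨ha, h3 ▸ hb h2, fun y hy => hc y hy⟩
  · rintro ⟨ha, hb, hc⟩
    exact ⟨ha, fun _ => h3 ▸ hb, fun y hy => hc y hy⟩

lemma fiber_zero (n m : ℕ) (hmn : m < n) :
    ((Tfin n m).filter (fun x => (hfin m x).card = 0)).card = b (n:ℤ) ((m:ℤ)-1) := by
  have hn : 1 ≤ n := by omega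
  rw [b, Set.ncard_eq_toFinset_card _ (BzFinite n ((m:ℤ)-1))]
  congr 1
  apply Finset.ext
  intro x
  rw [Finset.mem_filter, Set.Finite.mem_toFinset, B_coe_eq hn, Finset.card_eq_zero]
  constructor
  · rintro ⟨hxT, hemp⟩
    obtain ⟨hxA, hxA', hxm⟩ := (mem_Tfin hn).1 hxT
    refine ⟨hxA, hxA', fun y hy => ?_⟩
    by_contra h
    have : y ∈ hfin m x := (hfin_sdef hxm y).2 ⟨hy, h⟩
    rw [hemp] at this
    exact absurd this (Finset.notMem_empty y)
  · rintro ⟨hxA, hxA', hlow⟩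
    have hxm : ∀ y, y ∈ x → y ∈ A m := fun y hy => Lw_le m (hlow y hy)
    refine ⟨(mem_Tfin hn).2 ⟨hxA, hxA', hxm⟩, ?_⟩
    apply Finset.eq_empty_iff_forall_notMem.2
    intro y hy
    exact ((hfin_sdef hxm y).1 hy).2 (hlow y ((hfin_sdef hxm y).1 hy).1)

theorem stmt7 (n m : ℕ) (hmn : m < n) :
    b n m = b n ((m : ℤ) - 1)
      + (∑ k ∈ Finset.Icc 1 (n - m - 1),
          b ((n : ℤ) - k) ((m : ℤ) - 1) * Nat.choose (b m ((m : ℤ) - 1)) k)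
      + Nat.choose (b m ((m : ℤ) - 1)) (n - m)
        * ∑ k ∈ Finset.range (m + 1), b k ((k : ℤ) - 1) := by
  have hn : 1 ≤ n := by omega
  set N := n - m with hN
  have hN1 : 1 ≤ N := by omega
  have hsum : (Tfin n m).card
      = ∑ k ∈ Finset.range (N+1), ((Tfin n m).filter (fun x => (hfin m x).card = k)).card := by
    apply Finset.card_eq_sum_card_fiberwise
    intro x hx
    simp only [Finset.mem_coe, Finset.mem_range]
    have := hfin_card_le hmn hx
    omega
  have hrange : Finset.range (N+1) = insert 0 (insert N (Finset.Icc 1 (N-1))) := by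
    ext j
    simp only [Finset.mem_range, Finset.mem_insert, Finset.mem_Icc]
    omega
  have h0mem : (0:ℕ) ∉ insert N (Finset.Icc 1 (N-1)) := by
    simp only [Finset.mem_insert, Finset.mem_Icc]
    omega
  have hNmem : N ∉ Finset.Icc 1 (N-1) := by
    simp only [Finset.mem_Icc]
    omega
  have hfibN : ((Tfin n m).filter (fun x => (hfin m x).card = N)).card
      = Nat.choose (b (m:ℤ) ((m:ℤ)-1)) N * ∑ k ∈ Finset.range (m+1), b (k:ℤ) ((k:ℤ)-1) := by
    rw [fiber_card hmn hN1 (by omega)]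
    rw [Gset_high n m hmn, A_ncard_sum, ← bD]
  have hfibk : ∀ k ∈ Finset.Icc 1 (N-1),
      ((Tfin n m).filter (fun x => (hfin m x).card = k)).card
      = b ((n:ℤ) - k) ((m:ℤ)-1) * Nat.choose (b (m:ℤ) ((m:ℤ)-1)) k := by
    intro k hk
    rw [Finset.mem_Icc] at hk
    have hkN : k ≤ n - m := by omega
    rw [fiber_card hmn hk.1 hkN, Gset_mid n m k hmn hk.1 (by omega), ← bD,
      show ((n:ℤ) - k) = ((n - k : ℕ) : ℤ) by
        rw [Nat.cast_sub (by omega : k ≤ n)]]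
    rw [mul_comm]
    rfl
  rw [Tcard n m, hsum, hrange, Finset.sum_insert h0mem, Finset.sum_insert hNmem,
    fiber_zero n m hmn, hfibN, Finset.sum_congr rfl hfibk]
  ring
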